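/- Let (I, E) be a finite simple graph, Φ : I → ℝ, and let BS(ρ) := Σ_{{i,j}∈E} [ F(ρ_j − ρ_i) + F(ρ_i − ρ_j) − (π/2)(ρ_i + ρ_j) ] + Σ_{i∈I} Φ_i ρ_i with F(x) := ∫_{−∞}^{x} arctan(e^t) dt. Suppose there exists a coherent angle system, i.e., numbers φ_{ij} > 0 for each ordered pair (i,j) with {i,j} ∈ E such that φ_{ij} + φ_{ji} = π/2 for each edge and Σ_{j : {i,j}∈E} 2·φ_{ij} = Φ_i for each i ∈ I, and set ε₀ := min over all ordered pairs of φ_{ij}. Then BS(ρ) ≥ 2·ε₀ · Σ_{{i,j}∈E} |ρ_i − ρ_j| for every ρ ∈ ℝ^I, with strict inequality whenever E is nonempty. -/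

import Mathlib

/-!
Substituting `t ↦ -t` and using `arctan y + arctan y⁻¹ = π/2` gives `F x - F (-x) = π x / 2`,
and `F > 0`. The vertex condition spreads `Σ Φ_i ρ_i` over the edges as `2 φ_ij ρ_i + 2 φ_ji ρ_j`,
so with `x = ρ_j - ρ_i` an edge contributes `F x + F (-x) + (φ_ji - φ_ij) x`, which equals both
`2 F (-x) + 2 φ_ji x` and `2 F x - 2 φ_ij x`; hence it exceeds `2 ε₀ |x|`. The minimum `ε₀` is
attained, so there is at least one edge and the inequality is strict.
-/

noncomputable section

/-- `F x = ∫_{-∞}^x arctan (e^t) dt`. -/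
def Fint (x : ℝ) : ℝ := ∫ t in Set.Iio x, Real.arctan (Real.exp t)

/-- The Bobenko–Springborn functional
`BS(ρ) = Σ_{{i,j}∈E} [F(ρ_j-ρ_i) + F(ρ_i-ρ_j) - (π/2)(ρ_i+ρ_j)] + Σ_i Φ_i ρ_i`. -/
def BS {I : Type*} [Fintype I] [DecidableEq I] (G : SimpleGraph I) [DecidableRel G.Adj]
    (Φ : I → ℝ) (ρ : I → ℝ) : ℝ :=
  (∑ e ∈ G.edgeFinset,
    Sym2.lift
      ⟨fun i j => Fint (ρ j - ρ i) + Fint (ρ i - ρ j) - Real.pi / 2 * (ρ i + ρ j),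
       fun i j => by ring⟩ e)
  + ∑ i, Φ i * ρ i

open MeasureTheory Real Finset

namespace SimpleGraph

variable {I M : Type*} [Fintype I] [DecidableEq I] [AddCommMonoid M]
  (G : SimpleGraph I) [DecidableRel G.Adj]

theorem sum_darts_eq_sum_sum_neighborFinset (f : I → I → M) :
    ∑ d : G.Dart, f d.fst d.snd = ∑ i, ∑ j ∈ G.neighborFinset i, f i j := by
  rw [← sum_fiberwise univ fun d : G.Dart => d.fst]
  refine sum_congr rfl fun i _ => ?_
  rw [dart_fst_fiber, sum_image fun _ _ _ _ h => G.dartOfNeighborSet_injective i h]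
  exact (sum_subtype _ (fun _ => mem_neighborFinset G i _) (f i)).symm

theorem sum_darts_eq_sum_edgeFinset (f : I → I → M) :
    ∑ d : G.Dart, f d.fst d.snd =
      ∑ e ∈ G.edgeFinset, Sym2.lift ⟨fun i j => f i j + f j i, fun _ _ => add_comm _ _⟩ e := by
  rw [← sum_fiberwise_of_maps_to (g := Dart.edge) fun d _ => G.mem_edgeFinset.2 d.edge_mem]
  refine sum_congr rfl fun e he => ?_
  induction e using Sym2.ind with | _ i j =>
  let d : G.Dart := ⟨(i, j), G.mem_edgeFinset.1 he⟩
  rw [show s(i, j) = d.edge from rfl, d.edge_fiber, sum_pair d.symm_ne.symm]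
  rfl

end SimpleGraph

theorem arctan_exp_pos (t : ℝ) : 0 < arctan (exp t) := by positivity

theorem arctan_exp_le_exp (t : ℝ) : arctan (exp t) ≤ exp t := by
  simpa only [tan_arctan] using le_tan (arctan_exp_pos t).le (arctan_lt_pi_div_two _)

theorem arctan_exp_add_arctan_exp_neg (t : ℝ) : arctan (exp t) + arctan (exp (-t)) = π / 2 := by
  rw [exp_neg, arctan_inv_of_pos (exp_pos t)]
  ring

theorem integrableOn_arctan_exp_Iic (x : ℝ) :
    IntegrableOn (fun t => arctan (exp t)) (Set.Iic x) := by
  refine (integrableOn_exp_Iic x).mono' (by fun_prop) (Filter.Eventually.of_forall fun t => ?_)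
  rw [norm_of_nonneg (arctan_exp_pos t).le]
  exact arctan_exp_le_exp t

theorem Fint_eq_integral_Iic (x : ℝ) : Fint x = ∫ t in Set.Iic x, arctan (exp t) :=
  setIntegral_congr_set Iio_ae_eq_Iic

theorem Fint_pos (x : ℝ) : 0 < Fint x := by
  rw [Fint_eq_integral_Iic, setIntegral_pos_iff_support_of_nonneg_ae
    (Filter.Eventually.of_forall fun t => (arctan_exp_pos t).le) (integrableOn_arctan_exp_Iic x),
    Function.support_eq_univ fun t => (arctan_exp_pos t).ne', Set.univ_inter]
  simp

theorem Fint_sub_Fint_neg (x : ℝ) : Fint x - Fint (-x) = π / 2 * x := by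
  have hsymm : ∫ t in (-x)..x, arctan (exp (-t)) = ∫ t in (-x)..x, arctan (exp t) := by
    simpa using intervalIntegral.integral_comp_neg (a := -x) (b := x) fun t => arctan (exp t)
  have hsum : (∫ t in (-x)..x, arctan (exp t)) + ∫ t in (-x)..x, arctan (exp (-t)) = π * x := by
    rw [← intervalIntegral.integral_add (by apply Continuous.intervalIntegrable; fun_prop)
      (by apply Continuous.intervalIntegrable; fun_prop)]
    simp only [arctan_exp_add_arctan_exp_neg, intervalIntegral.integral_const, smul_eq_mul]
    ring
  rw [Fint_eq_integral_Iic, Fint_eq_integral_Iic, intervalIntegral.integral_Iic_sub_Iic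
    (integrableOn_arctan_exp_Iic (-x)) (integrableOn_arctan_exp_Iic x)]
  linarith

theorem two_mul_abs_lt_Fint_add_Fint_neg {a b ε : ℝ} (hab : a + b = π / 2) (ha : ε ≤ a)
    (hb : ε ≤ b) (x : ℝ) : 2 * ε * |x| < Fint x + Fint (-x) + (b - a) * x := by
  have hsub := Fint_sub_Fint_neg x
  have hpos := Fint_pos x
  have hpos' := Fint_pos (-x)
  rcases le_or_gt 0 x with hx | hx
  · rw [abs_of_nonneg hx]
    nlinarith
  · rw [abs_of_neg hx]
    nlinarith

theorem BS_coercive_general {I : Type*} [Fintype I] [DecidableEq I]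
    (G : SimpleGraph I) [DecidableRel G.Adj] (Φ : I → ℝ)
    (φ : I → I → ℝ) (ε₀ : ℝ)
    (hangle : ∀ i j, G.Adj i j → φ i j + φ j i = Real.pi / 2)
    (hΦ : ∀ i, ∑ j ∈ G.neighborFinset i, 2 * φ i j = Φ i)
    (hmin : IsLeast {t : ℝ | ∃ i j, G.Adj i j ∧ t = φ i j} ε₀) :
    ∀ ρ : I → ℝ,
      2 * ε₀ * (∑ e ∈ G.edgeFinset,
          Sym2.lift ⟨fun i j => |ρ i - ρ j|, fun i j => abs_sub_comm (ρ i) (ρ j)⟩ e)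
        ≤ BS G Φ ρ ∧
      (G.edgeFinset.Nonempty →
        2 * ε₀ * (∑ e ∈ G.edgeFinset,
            Sym2.lift ⟨fun i j => |ρ i - ρ j|, fun i j => abs_sub_comm (ρ i) (ρ j)⟩ e)
          < BS G Φ ρ) := by
  intro ρ
  have hε : ∀ i j, G.Adj i j → ε₀ ≤ φ i j := fun i j hij => hmin.2 ⟨i, j, hij, rfl⟩
  have hne : G.edgeFinset.Nonempty := by
    obtain ⟨i, j, hij, -⟩ := hmin.1
    exact ⟨s(i, j), G.mem_edgeFinset.2 hij⟩
  have hvertex : ∑ i, Φ i * ρ i = ∑ e ∈ G.edgeFinset,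
      Sym2.lift ⟨fun i j => 2 * φ i j * ρ i + 2 * φ j i * ρ j, fun _ _ => add_comm _ _⟩ e := by
    simp_rw [← hΦ, sum_mul]
    rw [← G.sum_darts_eq_sum_sum_neighborFinset]
    exact G.sum_darts_eq_sum_edgeFinset fun i j => 2 * φ i j * ρ i
  have hstrict : 2 * ε₀ * (∑ e ∈ G.edgeFinset,
      Sym2.lift ⟨fun i j => |ρ i - ρ j|, fun i j => abs_sub_comm (ρ i) (ρ j)⟩ e) < BS G Φ ρ := by
    rw [BS, hvertex, ← sum_add_distrib, mul_sum]
    refine sum_lt_sum_of_nonempty hne fun e he => ?_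
    induction e using Sym2.ind with | _ i j =>
    have hij : G.Adj i j := G.mem_edgeFinset.1 he
    have hedge := two_mul_abs_lt_Fint_add_Fint_neg (hangle i j hij) (hε i j hij)
      (hε j i hij.symm) (ρ j - ρ i)
    rw [neg_sub, abs_sub_comm] at hedge
    simp only [Sym2.lift_mk]
    linear_combination hedge - (ρ i + ρ j) * hangle i j hij
  exact ⟨hstrict.le, fun _ => hstrict⟩

/-- Coercivity of the Bobenko–Springborn functional: if there is a coherent angle system
`φ` with minimal angle `ε₀`, then `BS(ρ) ≥ 2 ε₀ Σ_{{i,j}∈E} |ρ_i - ρ_j|`, with strict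
inequality whenever the edge set is nonempty. -/
theorem BS_coercive {I : Type*} [Fintype I] [DecidableEq I]
    (G : SimpleGraph I) [DecidableRel G.Adj] (Φ : I → ℝ)
    (φ : I → I → ℝ) (ε₀ : ℝ)
    (hpos : ∀ i j, G.Adj i j → 0 < φ i j)
    (hangle : ∀ i j, G.Adj i j → φ i j + φ j i = Real.pi / 2)
    (hΦ : ∀ i, ∑ j ∈ G.neighborFinset i, 2 * φ i j = Φ i)
    (hmin : IsLeast {t : ℝ | ∃ i j, G.Adj i j ∧ t = φ i j} ε₀) :
    ∀ ρ : I → ℝ,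
      2 * ε₀ * (∑ e ∈ G.edgeFinset,
          Sym2.lift ⟨fun i j => |ρ i - ρ j|, fun i j => abs_sub_comm (ρ i) (ρ j)⟩ e)
        ≤ BS G Φ ρ ∧
      (G.edgeFinset.Nonempty →
        2 * ε₀ * (∑ e ∈ G.edgeFinset,
            Sym2.lift ⟨fun i j => |ρ i - ρ j|, fun i j => abs_sub_comm (ρ i) (ρ j)⟩ e)
          < BS G Φ ρ) :=
  BS_coercive_general G Φ φ ε₀ hangle hΦ hmin
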